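/- Let K ∈ ℝ_{>0}^{R1×R2} be entrywise positive, let μ ∈ ℝ_{>0}^{R1} and ν ∈ ℝ_{>0}^{R2} be entrywise positive, and let (u*, v*) be positive vectors satisfying u* = μ ./ (K v*) and v* = ν ./ (Kᵀ u*). Define one full Sinkhorn iteration by u⁺ = μ ./ (K v) and v⁺ = ν ./ (Kᵀ u⁺). Then for any entrywise positive v, d_HP(v⁺, v*) ≤ κ(K)² · d_HP(v, v*), where d_HP is the Hilbert projective metric and κ(K) the Birkhoff contraction constant of K. -/

import Mathlib

/-!
Both half-steps have the form `z ↦ μ ./ (K z)`. Entrywise inversion `z ↦ μ ./ z` is an isometry of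
`d_HP`, so the full step is controlled by Birkhoff's contraction `d_HP(Kx, Ky) ≤ κ(K) d_HP(x, y)`,
used once for `K` and once for `Kᵀ`, which has the same `ψ`.

For Birkhoff's bound, sandwich `m y ≤ x ≤ M y` with `log (M/m) ≤ d_HP(x, y)` and split
`y = p + q`, `x = M p + m q` with `p, q ≥ 0`. A cross ratio of `Kx` and `Ky` at rows `i, j` is then
the cross ratio of the `2 × 2` matrix `[(Kp)_i, (Kq)_i; (Kp)_j, (Kq)_j]` applied to `(M, m)` and
`(1, 1)`; positivity of `K` bounds that matrix's own cross ratio by `ψ(K)`, and an elementary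
estimate gives `((uw + 1)/(u + w))² ≤ (M/m)^κ(K)` for `u² = M/m`, `w² = ψ(K)`.
-/

noncomputable section

/-- The Hilbert projective metric `d_HP(x,y) = log max_{i,j} (x_i y_j)/(x_j y_i)`
on entrywise positive vectors. -/
def dHP {R : ℕ} (x y : Fin R → ℝ) : ℝ :=
  Real.log (⨆ i, ⨆ j, x i * y j / (x j * y i))

/-- `ψ(K) = max_{i,j,k,l} (K_{ik} K_{jl})/(K_{jk} K_{il})` for a positive matrix `K`. -/
def psiK {R1 R2 : ℕ} (K : Matrix (Fin R1) (Fin R2) ℝ) : ℝ :=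
  ⨆ i, ⨆ j, ⨆ k, ⨆ l, K i k * K j l / (K j k * K i l)

/-- The Birkhoff contraction constant `κ(K) = (√ψ(K) - 1)/(√ψ(K) + 1)`. -/
def kappaK {R1 R2 : ℕ} (K : Matrix (Fin R1) (Fin R2) ℝ) : ℝ :=
  (Real.sqrt (psiK K) - 1) / (Real.sqrt (psiK K) + 1)

open Matrix

theorem log_mul_add_one_div_add_le {u w : ℝ} (hu : 1 ≤ u) (hw : 1 ≤ w) :
    Real.log ((u * w + 1) / (u + w)) ≤ (w - 1) / (w + 1) * Real.log u := by
  set κ := (w - 1) / (w + 1)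
  let f : ℝ → ℝ := fun x ↦ κ * Real.log x - Real.log (x * w + 1) + Real.log (x + w)
  let f' : ℝ → ℝ := fun x ↦ κ / x - w / (x * w + 1) + 1 / (x + w)
  have hf : ∀ x : ℝ, 0 < x → HasDerivAt f (f' x) x := fun x hx ↦ by
    have := (((Real.hasDerivAt_log hx.ne').const_mul κ).sub
      (((hasDerivAt_id x).mul_const w).add_const 1 |>.log (by positivity))).add
      (((hasDerivAt_id x).add_const w).log (by positivity))
    exact this.congr_deriv (by simp only [f', id]; ring)
  have hf' : ∀ x : ℝ, 0 < x → 0 ≤ f' x := fun x hx ↦ by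
    have : f' x = (w - 1) * w * (x - 1) ^ 2 / ((w + 1) * x * ((x * w + 1) * (x + w))) := by
      simp only [f', κ]; field_simp; ring
    rw [this]
    have : 0 ≤ w - 1 := by linarith
    positivity
  have hmono : MonotoneOn f (Set.Ioi 0) :=
    monotoneOn_of_hasDerivWithinAt_nonneg (convex_Ioi 0)
      (fun x hx ↦ (hf x hx).continuousAt.continuousWithinAt)
      (fun x hx ↦ (hf x (interior_subset hx)).hasDerivWithinAt)
      (fun x hx ↦ hf' x (interior_subset hx))
  have h := hmono (Set.mem_Ioi.2 one_pos) (Set.mem_Ioi.2 (by linarith)) hu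
  simp only [f, Real.log_one, mul_zero, one_mul, zero_sub, add_comm 1 w, neg_add_cancel] at h
  rw [Real.log_div (by positivity) (by positivity)]
  linarith

theorem sq_mul_add_one_div_add_le_rpow {u w : ℝ} (hu : 1 ≤ u) (hw : 1 ≤ w) :
    ((u * w + 1) / (u + w)) ^ 2 ≤ (u ^ 2) ^ ((w - 1) / (w + 1)) := by
  rw [Real.le_rpow_iff_log_le (by positivity) (by positivity), Real.log_pow, Real.log_pow]
  nlinarith [log_mul_add_one_div_add_le hu hw]

theorem cross_ratio_le {u w A A' B B' : ℝ} (hu : 1 ≤ u) (hw : 1 ≤ w) (hAA' : 0 ≤ A + A')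
    (hB : 0 ≤ B) (hBB' : 0 < B + B') (hcon : A * B' ≤ w ^ 2 * (B * A')) :
    (u + w) ^ 2 * ((u ^ 2 * A + A') * (B + B'))
      ≤ (u * w + 1) ^ 2 * ((u ^ 2 * B + B') * (A + A')) := by
  have hu2 : 0 ≤ u ^ 2 - 1 := by nlinarith
  have hw2 : 0 ≤ w ^ 2 - 1 := by nlinarith
  -- Pushing `(A : A')` to the extreme `(w² B : B')` allowed by `hcon` only increases the left
  -- side (`h₁`); at that extreme the inequality is polynomial in `B, B'` (`h₂`).
  have h₁ : (u ^ 2 * A + A') * (w ^ 2 * B + B') ≤ (u ^ 2 * w ^ 2 * B + B') * (A + A') := by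
    nlinarith [mul_nonneg hu2 (sub_nonneg.2 hcon)]
  have h₂ : (u + w) ^ 2 * ((u ^ 2 * w ^ 2 * B + B') * (B + B'))
      ≤ (u * w + 1) ^ 2 * ((u ^ 2 * B + B') * (w ^ 2 * B + B')) := by
    nlinarith [mul_nonneg (mul_nonneg hu2 hw2) (sq_nonneg (u * w * B - B'))]
  refine le_of_mul_le_mul_right ?_ (by nlinarith : 0 < w ^ 2 * B + B')
  calc (u + w) ^ 2 * ((u ^ 2 * A + A') * (B + B')) * (w ^ 2 * B + B')
      = (u + w) ^ 2 * (B + B') * ((u ^ 2 * A + A') * (w ^ 2 * B + B')) := by ring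
    _ ≤ (u + w) ^ 2 * (B + B') * ((u ^ 2 * w ^ 2 * B + B') * (A + A')) := by gcongr
    _ = (u + w) ^ 2 * ((u ^ 2 * w ^ 2 * B + B') * (B + B')) * (A + A') := by ring
    _ ≤ (u * w + 1) ^ 2 * ((u ^ 2 * B + B') * (w ^ 2 * B + B')) * (A + A') := by gcongr
    _ = _ := by ring

theorem two_by_two_ratio_le_rpow {m M ψ A A' B B' : ℝ} (hm : 0 < m) (hmM : m ≤ M) (hψ : 1 ≤ ψ)
    (hAA' : 0 < A + A') (hB : 0 ≤ B) (hBB' : 0 < B + B') (hcon : A * B' ≤ ψ * (B * A')) :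
    (M * A + m * A') * (B + B') / ((M * B + m * B') * (A + A'))
      ≤ (M / m) ^ ((√ψ - 1) / (√ψ + 1)) := by
  set u := √(M / m)
  set w := √ψ
  have hu : 1 ≤ u := Real.one_le_sqrt.2 ((one_le_div hm).2 hmM)
  have hw : 1 ≤ w := Real.one_le_sqrt.2 hψ
  have hu2 : u ^ 2 = M / m := Real.sq_sqrt (div_nonneg (hm.le.trans hmM) hm.le)
  have hM : M = u ^ 2 * m := by rw [hu2, div_mul_cancel₀ _ hm.ne']
  have hden : 0 < (u ^ 2 * B + B') * (A + A') := by
    have : B + B' ≤ u ^ 2 * B + B' := by nlinarith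
    exact mul_pos (by linarith) hAA'
  have hcross := cross_ratio_le hu hw hAA'.le hB hBB' (by rwa [Real.sq_sqrt (by linarith)])
  calc (M * A + m * A') * (B + B') / ((M * B + m * B') * (A + A'))
      = (u ^ 2 * A + A') * (B + B') / ((u ^ 2 * B + B') * (A + A')) := by
        rw [hM]; field_simp
    _ ≤ ((u * w + 1) / (u + w)) ^ 2 := by
        rw [div_le_iff₀ hden, div_pow, div_mul_eq_mul_div, le_div_iff₀ (by positivity)]
        linarith
    _ ≤ (u ^ 2) ^ ((w - 1) / (w + 1)) := sq_mul_add_one_div_add_le_rpow hu hw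
    _ = (M / m) ^ ((w - 1) / (w + 1)) := by rw [hu2]

theorem dotProduct_mul_dotProduct_le {ι : Type*} [Fintype ι] {a b p q : ι → ℝ} {c : ℝ}
    (h : ∀ k l, a k * b l ≤ c * (b k * a l)) (hp : 0 ≤ p) (hq : 0 ≤ q) :
    (a ⬝ᵥ p) * (b ⬝ᵥ q) ≤ c * ((b ⬝ᵥ p) * (a ⬝ᵥ q)) := by
  simp only [dotProduct, Finset.sum_mul_sum]
  simp only [Finset.mul_sum]
  refine Finset.sum_le_sum fun k _ ↦ Finset.sum_le_sum fun l _ ↦ ?_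
  calc a k * p k * (b l * q l) = a k * b l * (p k * q l) := by ring
    _ ≤ c * (b k * a l) * (p k * q l) :=
        mul_le_mul_of_nonneg_right (h k l) (mul_nonneg (hp k) (hq l))
    _ = c * (b k * p k * (a l * q l)) := by ring

theorem exists_nonneg_eq_smul_add_smul {ι : Type*} {m M : ℝ} {x y : ι → ℝ} (hy : 0 ≤ y)
    (hmx : m • y ≤ x) (hxM : x ≤ M • y) :
    ∃ p q : ι → ℝ, 0 ≤ p ∧ 0 ≤ q ∧ x = M • p + m • q ∧ y = p + q := by
  have hseg : ∀ k, x k ∈ segment ℝ (m * y k) (M * y k) := fun k ↦ by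
    rw [segment_eq_uIcc]
    exact Set.Icc_subset_uIcc ⟨hmx k, hxM k⟩
  choose a b ha hb hab hx using hseg
  refine ⟨fun k ↦ b k * y k, fun k ↦ a k * y k, fun k ↦ mul_nonneg (hb k) (hy k),
    fun k ↦ mul_nonneg (ha k) (hy k), funext fun k ↦ ?_, funext fun k ↦ ?_⟩
  · simp only [smul_eq_mul] at hx
    simp only [Pi.add_apply, Pi.smul_apply, smul_eq_mul]
    linear_combination (hx k).symm
  · simp only [Pi.add_apply]
    linear_combination (-y k) * hab k

theorem mulVec_pos {ι κ : Type*} [Fintype κ] [Nonempty κ] {K : Matrix ι κ ℝ}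
    (hK : ∀ i j, 0 < K i j) {x : κ → ℝ} (hx : ∀ k, 0 < x k) (i : ι) : 0 < (K *ᵥ x) i :=
  Finset.sum_pos (fun k _ ↦ mul_pos (hK i k) (hx k)) Finset.univ_nonempty

theorem mulVec_nonneg {ι κ : Type*} [Fintype κ] {K : Matrix ι κ ℝ}
    (hK : ∀ i j, 0 ≤ K i j) {x : κ → ℝ} (hx : 0 ≤ x) (i : ι) : 0 ≤ (K *ᵥ x) i :=
  Finset.sum_nonneg fun k _ ↦ mul_nonneg (hK i k) (hx k)

section HilbertMetric

variable {R : ℕ} {x y : Fin R → ℝ}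

theorem div_le_iSup_div (i j : Fin R) :
    x i * y j / (x j * y i) ≤ ⨆ i, ⨆ j, x i * y j / (x j * y i) :=
  Finite.le_ciSup_of_le i (Finite.le_ciSup (fun j ↦ x i * y j / (x j * y i)) j)

theorem log_div_le_dHP (hx : ∀ i, 0 < x i) (hy : ∀ i, 0 < y i) (i j : Fin R) :
    Real.log (x i * y j / (x j * y i)) ≤ dHP x y :=
  Real.log_le_log (by have := hx i; have := hx j; have := hy i; have := hy j; positivity)
    (div_le_iSup_div i j)

theorem dHP_le_log [Nonempty (Fin R)] (hx : ∀ i, 0 < x i) (hy : ∀ i, 0 < y i) {c : ℝ}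
    (h : ∀ i j, x i * y j / (x j * y i) ≤ c) : dHP x y ≤ Real.log c := by
  obtain ⟨i⟩ := ‹Nonempty (Fin R)›
  have hsup := div_le_iSup_div (x := x) (y := y) i i
  rw [div_self (mul_pos (hx i) (hy i)).ne'] at hsup
  exact Real.log_le_log (by linarith) (ciSup_le fun i ↦ ciSup_le fun j ↦ h i j)

theorem dHP_div_div [Nonempty (Fin R)] {μ : Fin R → ℝ} (hμ : ∀ i, μ i ≠ 0) (hx : ∀ i, x i ≠ 0)
    (hy : ∀ i, y i ≠ 0) : dHP (μ / x) (μ / y) = dHP x y := by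
  have hswap : ∀ i j, (μ / x) i * (μ / y) j / ((μ / x) j * (μ / y) i) = x j * y i / (x i * y j) :=
    fun i j ↦ by
      have := hμ i; have := hμ j; have := hx i; have := hx j; have := hy i; have := hy j
      simp only [Pi.div_apply]
      field_simp
  simp only [dHP, hswap]
  congr 1
  exact le_antisymm (ciSup_le fun i ↦ ciSup_le fun j ↦ div_le_iSup_div j i)
    (ciSup_le fun i ↦ ciSup_le fun j ↦
      Finite.le_ciSup_of_le j (Finite.le_ciSup (fun i' ↦ x i' * y j / (x j * y i')) i))

theorem exists_smul_le_le_smul_log_div_le_dHP [Nonempty (Fin R)] (hx : ∀ i, 0 < x i)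
    (hy : ∀ i, 0 < y i) :
    ∃ m M : ℝ, 0 < m ∧ m ≤ M ∧ m • y ≤ x ∧ x ≤ M • y ∧ Real.log (M / m) ≤ dHP x y := by
  obtain ⟨k₀, -, hk₀⟩ :=
    Finset.exists_min_image Finset.univ (fun k ↦ x k / y k) Finset.univ_nonempty
  obtain ⟨k₁, -, hk₁⟩ :=
    Finset.exists_max_image Finset.univ (fun k ↦ x k / y k) Finset.univ_nonempty
  refine ⟨x k₀ / y k₀, x k₁ / y k₁, div_pos (hx k₀) (hy k₀), hk₀ k₁ (Finset.mem_univ _),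
    fun k ↦ (le_div_iff₀ (hy k)).1 (hk₀ k (Finset.mem_univ _)),
    fun k ↦ (div_le_iff₀ (hy k)).1 (hk₁ k (Finset.mem_univ _)), ?_⟩
  convert log_div_le_dHP hx hy k₁ k₀ using 2
  field_simp

end HilbertMetric

section Birkhoff

variable {R1 R2 : ℕ}

theorem le_psiK (K : Matrix (Fin R1) (Fin R2) ℝ) (i j : Fin R1) (k l : Fin R2) :
    K i k * K j l / (K j k * K i l) ≤ psiK K :=
  Finite.le_ciSup_of_le i <| Finite.le_ciSup_of_le j <| Finite.le_ciSup_of_le k <|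
    Finite.le_ciSup (fun l ↦ K i k * K j l / (K j k * K i l)) l

theorem one_le_psiK [Nonempty (Fin R1)] [Nonempty (Fin R2)] {K : Matrix (Fin R1) (Fin R2) ℝ}
    (hK : ∀ i j, 0 < K i j) : 1 ≤ psiK K := by
  obtain ⟨i⟩ := ‹Nonempty (Fin R1)›
  obtain ⟨k⟩ := ‹Nonempty (Fin R2)›
  simpa [div_self (mul_pos (hK i k) (hK i k)).ne'] using le_psiK K i i k k

theorem psiK_transpose_le [Nonempty (Fin R1)] [Nonempty (Fin R2)]
    (K : Matrix (Fin R1) (Fin R2) ℝ) : psiK Kᵀ ≤ psiK K :=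
  ciSup_le fun i ↦ ciSup_le fun j ↦ ciSup_le fun k ↦ ciSup_le fun l ↦
    (le_psiK K k l i j).trans_eq' (by simp only [transpose_apply]; ring)

theorem kappaK_transpose [Nonempty (Fin R1)] [Nonempty (Fin R2)]
    (K : Matrix (Fin R1) (Fin R2) ℝ) : kappaK Kᵀ = kappaK K := by
  rw [kappaK, kappaK, (psiK_transpose_le K).antisymm (by simpa using psiK_transpose_le Kᵀ)]

theorem kappaK_nonneg [Nonempty (Fin R1)] [Nonempty (Fin R2)] {K : Matrix (Fin R1) (Fin R2) ℝ}
    (hK : ∀ i j, 0 < K i j) : 0 ≤ kappaK K := by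
  have := Real.one_le_sqrt.2 (one_le_psiK hK)
  exact div_nonneg (by linarith) (by linarith)

theorem mulVec_mul_mulVec_le_psiK {K : Matrix (Fin R1) (Fin R2) ℝ} (hK : ∀ i j, 0 < K i j)
    {p q : Fin R2 → ℝ} (hp : 0 ≤ p) (hq : 0 ≤ q) (i j : Fin R1) :
    (K *ᵥ p) i * (K *ᵥ q) j ≤ psiK K * ((K *ᵥ p) j * (K *ᵥ q) i) :=
  dotProduct_mul_dotProduct_le
    (fun k l ↦ (div_le_iff₀ (mul_pos (hK j k) (hK i l))).1 (le_psiK K i j k l)) hp hq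

theorem dHP_mulVec_le [Nonempty (Fin R1)] [Nonempty (Fin R2)] {K : Matrix (Fin R1) (Fin R2) ℝ}
    (hK : ∀ i j, 0 < K i j) {x y : Fin R2 → ℝ} (hx : ∀ k, 0 < x k) (hy : ∀ k, 0 < y k) :
    dHP (K *ᵥ x) (K *ᵥ y) ≤ kappaK K * dHP x y := by
  obtain ⟨m, M, hm, hmM, hmx, hxM, hlog⟩ := exists_smul_le_le_smul_log_div_le_dHP hx hy
  have hKx := mulVec_pos hK hx
  have hKy := mulVec_pos hK hy
  obtain ⟨p, q, hp, hq, rfl, rfl⟩ := exists_nonneg_eq_smul_add_smul (fun k ↦ (hy k).le) hmx hxM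
  have hKp := mulVec_nonneg (fun i j ↦ (hK i j).le) hp
  have hratio : ∀ i j, (K *ᵥ (M • p + m • q)) i * (K *ᵥ (p + q)) j
      / ((K *ᵥ (M • p + m • q)) j * (K *ᵥ (p + q)) i) ≤ (M / m) ^ kappaK K := fun i j ↦ by
    have hKpq := hKy
    simp only [mulVec_add, mulVec_smul, Pi.add_apply, Pi.smul_apply, smul_eq_mul] at hKpq ⊢
    exact two_by_two_ratio_le_rpow hm hmM (one_le_psiK hK) (hKpq i) (hKp j) (hKpq j)
      (mulVec_mul_mulVec_le_psiK hK hp hq i j)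
  calc dHP (K *ᵥ (M • p + m • q)) (K *ᵥ (p + q)) ≤ Real.log ((M / m) ^ kappaK K) :=
        dHP_le_log hKx hKy hratio
    _ = kappaK K * Real.log (M / m) := Real.log_rpow (div_pos (hm.trans_le hmM) hm) _
    _ ≤ kappaK K * dHP (M • p + m • q) (p + q) :=
        mul_le_mul_of_nonneg_left hlog (kappaK_nonneg hK)

end Birkhoff

/-- One full Sinkhorn iteration contracts the Hilbert projective metric with ratio
`κ(K)²`: if `(u*, v*)` is a Sinkhorn fixed point, `u⁺ = μ ./ (K v)` and
`v⁺ = ν ./ (Kᵀ u⁺)`, then `d_HP(v⁺, v*) ≤ κ(K)² d_HP(v, v*)`. -/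
theorem sinkhorn_full_step_contraction {R1 R2 : ℕ}
    [Nonempty (Fin R1)] [Nonempty (Fin R2)]
    (K : Matrix (Fin R1) (Fin R2) ℝ) (hK : ∀ i j, 0 < K i j)
    (μ : Fin R1 → ℝ) (ν : Fin R2 → ℝ)
    (hμpos : ∀ m, 0 < μ m) (hνpos : ∀ n, 0 < ν n)
    (ustar : Fin R1 → ℝ) (vstar : Fin R2 → ℝ)
    (hustar_pos : ∀ m, 0 < ustar m) (hvstar_pos : ∀ n, 0 < vstar n)
    (hustar : ∀ m, ustar m = μ m / K.mulVec vstar m)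
    (hvstar : ∀ n, vstar n = ν n / K.transpose.mulVec ustar n)
    (v : Fin R2 → ℝ) (hv : ∀ n, 0 < v n)
    (uplus : Fin R1 → ℝ) (huplus : ∀ m, uplus m = μ m / K.mulVec v m)
    (vplus : Fin R2 → ℝ) (hvplus : ∀ n, vplus n = ν n / K.transpose.mulVec uplus n) :
    dHP vplus vstar ≤ kappaK K ^ 2 * dHP v vstar := by
  have hKT : ∀ i j, 0 < Kᵀ i j := fun i j ↦ hK j i
  have hKv := mulVec_pos hK hv
  have huplus_pos : ∀ m, 0 < uplus m := fun m ↦ huplus m ▸ div_pos (hμpos m) (hKv m)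
  have hdu : dHP uplus ustar = dHP (K *ᵥ v) (K *ᵥ vstar) := by
    rw [show uplus = μ / K *ᵥ v from funext huplus,
      show ustar = μ / K *ᵥ vstar from funext hustar,
      dHP_div_div (fun m ↦ (hμpos m).ne') (fun m ↦ (hKv m).ne')
        (fun m ↦ (mulVec_pos hK hvstar_pos m).ne')]
  have hdv : dHP vplus vstar = dHP (Kᵀ *ᵥ uplus) (Kᵀ *ᵥ ustar) := by
    rw [show vplus = ν / Kᵀ *ᵥ uplus from funext hvplus,
      show vstar = ν / Kᵀ *ᵥ ustar from funext hvstar,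
      dHP_div_div (fun n ↦ (hνpos n).ne') (fun n ↦ (mulVec_pos hKT huplus_pos n).ne')
        (fun n ↦ (mulVec_pos hKT hustar_pos n).ne')]
  calc dHP vplus vstar ≤ kappaK Kᵀ * dHP uplus ustar :=
        hdv ▸ dHP_mulVec_le hKT huplus_pos hustar_pos
    _ ≤ kappaK K * (kappaK K * dHP v vstar) := by
        rw [kappaK_transpose, hdu]
        exact mul_le_mul_of_nonneg_left (dHP_mulVec_le hK hv hvstar_pos) (kappaK_nonneg hK)
    _ = kappaK K ^ 2 * dHP v vstar := by ring
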